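/- arXiv:2306.10719 — 2 statements merged into one kernel-verified Lean document; each statement's English description precedes it below -/
import Mathlib

section
/- Let C : ℤ → U(2) satisfy the standing Assumption and let U = S∘C. Let ψ ∈ ℋ be compactly supported with ‖ψ‖_ℋ = 1. Then there exist constants c₊, c₋ ≥ 0 with c₊ + c₋ = 1 such that for every ε ∈ (0,1): Σ_{x∈ℤ, |x| ≤ (1−ε)n} ‖U^n ψ(x)‖²_{ℂ²} → 0, Σ_{x∈ℤ, x ≥ (1−ε)n} ‖U^n ψ(x)‖²_{ℂ²} → c₊, and Σ_{x∈ℤ, x ≤ −(1−ε)n} ‖U^n ψ(x)‖²_{ℂ²} → c₋, as n → +∞. (Equivalently, X_n/n converges weakly to the distribution c₋δ_{−1} + c₊δ_{+1}, where X_n is the random variable with ℙ(X_n = x) = ‖U^n ψ(x)‖²_{ℂ²}.) -/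
noncomputable section

open scoped ComplexConjugate

/-- A state: a map ℤ → ℂ², components `ψ x 0` (left, ψ^L) and `ψ x 1` (right, ψ^R). -/
abbrev QWState := ℤ → Fin 2 → ℂ

/-- The quantum walk operator U = S∘C acting pointwise:
`(Uψ)(x) = ((C(x+1)ψ(x+1))₁, (C(x−1)ψ(x−1))₂)`. -/
def qwalk (C : ℤ → Matrix (Fin 2) (Fin 2) ℂ) (ψ : QWState) : QWState :=
  fun x => ![(C (x + 1)).mulVec (ψ (x + 1)) 0, (C (x - 1)).mulVec (ψ (x - 1)) 1]

/-- The standing Assumption on the coin. -/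
structure CoinAssumption (C : ℤ → Matrix (Fin 2) (Fin 2) ℂ) : Prop where
  unitary : ∀ x, C x ∈ Matrix.unitaryGroup (Fin 2) ℂ
  d11 : ∀ x, C x 0 0 ≠ 0
  d22 : ∀ x, C x 1 1 ≠ 0
  fin : Set.Finite {x : ℤ | C x ≠ 1}

/-- Outgoing: ψ^L vanishes far right, ψ^R vanishes far left. -/
def Outgoing (ψ : QWState) : Prop :=
  ∃ r : ℤ, 0 < r ∧ ∀ x : ℤ, r < x → ψ x 0 = 0 ∧ ψ (-x) 1 = 0

open Filter

/-!
Choose `m` so that the coin is trivial and `ψ` vanishes at all `|x| ≥ m`. Outside the box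
`[-m, m]` the walk is a free shift: right components move right, left components move left, and
nothing re-enters the box. So at time `n` the mass at `x = m + j` is the amplitude that left the
box to the right at time `n - j`, and the mass beyond `(1 - ε) n` is the total right outflow up to
time `≈ m + ε n`, which tends to the whole right outflow `c₊`; the left side follows by
reflection. Inside the box the state evolves by the compression `V` of `U`. An eigenvector of `V`
with `|μ| ≥ 1` leaks nothing by unitarity, so it is a finitely supported eigenvector of `U`,
which `c₂₂ ≠ 0` rules out. Hence the spectral radius of `V` is `< 1`, `Vⁿ → 0` by Gelfand's
formula, the box mass tends to `0` and `c₊ + c₋ = 1`. The mass of `|x| ≤ (1 - ε) n` is then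
squeezed by the two tails at `ε / 2`.
-/

open Topology Finset
open scoped Matrix

theorem tendsto_pow_atTop_nhds_zero_of_spectralRadius_lt_one {A : Type*} [NormedRing A]
    [NormedAlgebra ℂ A] [CompleteSpace A] {a : A} (h : spectralRadius ℂ a < 1) :
    Tendsto (a ^ ·) atTop (𝓝 0) := by
  obtain ⟨ρ, hρa, hρ1⟩ := ENNReal.lt_iff_exists_nnreal_btwn.mp h
  have hρ1 : ρ < 1 := by exact_mod_cast hρ1
  have hev :=
    (spectrum.pow_nnnorm_pow_one_div_tendsto_nhds_spectralRadius a).eventually_lt_const hρa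
  refine squeeze_zero_norm' ?_ (tendsto_pow_atTop_nhds_zero_of_lt_one ρ.2 hρ1)
  filter_upwards [hev, eventually_ge_atTop 1] with n hn hn1
  have : (‖a ^ n‖₊ : ENNReal) ≤ ρ ^ n := by
    have := ENNReal.rpow_le_rpow hn.le (z := n) (by positivity)
    rwa [← ENNReal.rpow_mul, one_div_mul_cancel (by positivity), ENNReal.rpow_one,
      ENNReal.rpow_natCast] at this
  exact_mod_cast this

theorem Matrix.sum_norm_sq_mulVec_of_mem_unitaryGroup {n : Type*} [Fintype n] [DecidableEq n]
    {A : Matrix n n ℂ} (hA : A ∈ Matrix.unitaryGroup n ℂ) (v : n → ℂ) :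
    ∑ i, ‖(A *ᵥ v) i‖ ^ 2 = ∑ i, ‖v i‖ ^ 2 := by
  have key : ∀ w : n → ℂ, ((∑ i, ‖w i‖ ^ 2 : ℝ) : ℂ) = star w ⬝ᵥ w := fun w => by
    simp [dotProduct, Complex.conj_mul']
  apply Complex.ofReal_injective
  rw [key, key, Matrix.star_mulVec, ← Matrix.dotProduct_mulVec, Matrix.mulVec_mulVec,
    ← Matrix.star_eq_conjTranspose, Matrix.mem_unitaryGroup_iff'.mp hA, Matrix.one_mulVec]

theorem tsum_subtype_eq_tsum_indicator {α β : Type*} [AddCommMonoid α] [TopologicalSpace α]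
    (p : β → Prop) (f : β → α) : ∑' x : {x // p x}, f x = ∑' x, {x | p x}.indicator f x :=
  tsum_subtype {x | p x} f

theorem tsum_eq_sum_Icc_add_tsum_gt_add_tsum_lt {f : ℤ → ℝ} (hf : Summable f) {a : ℤ}
    (ha : 0 ≤ a) :
    ∑' x, f x =
      ∑ x : Set.Icc (-a) a, f x + ∑' x : {x // a < x}, f x + ∑' x : {x // x < -a}, f x := by
  rw [← tsum_fintype (L := .unconditional _) (fun x : Set.Icc (-a) a => f x),
    tsum_subtype (Set.Icc (-a) a) f, tsum_subtype_eq_tsum_indicator, tsum_subtype_eq_tsum_indicator,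
    ← (hf.indicator _).tsum_add (hf.indicator _),
    ← ((hf.indicator _).add (hf.indicator _)).tsum_add (hf.indicator _)]
  refine tsum_congr fun x => ?_
  simp only [Set.indicator_apply, Set.mem_Icc, Set.mem_ofPred_eq]
  split_ifs <;> first | (exfalso; omega) | simp

theorem tsum_abs_le_add_tsum_ge_add_tsum_le_neg_le_tsum {f : ℤ → ℝ} (hf : Summable f)
    (hf0 : ∀ x, 0 ≤ f x) {a b : ℝ} (ha : 0 ≤ a) (hab : a < b) :
    ∑' x : {x : ℤ // |(x : ℝ)| ≤ a}, f x + ∑' x : {x : ℤ // b ≤ (x : ℝ)}, f x +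
      ∑' x : {x : ℤ // (x : ℝ) ≤ -b}, f x ≤ ∑' x, f x := by
  rw [tsum_subtype_eq_tsum_indicator, tsum_subtype_eq_tsum_indicator,
    tsum_subtype_eq_tsum_indicator, ← (hf.indicator _).tsum_add (hf.indicator _),
    ← ((hf.indicator _).add (hf.indicator _)).tsum_add (hf.indicator _)]
  refine (((hf.indicator _).add (hf.indicator _)).add (hf.indicator _)).tsum_le_tsum
    (fun x => ?_) hf
  simp only [Set.indicator_apply, Set.mem_ofPred_eq]
  split_ifs <;> linarith [le_abs_self (x : ℝ), neg_abs_le (x : ℝ), hf0 x]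

namespace QuantumWalk

def density (φ : QWState) (x : ℤ) : ℝ := ‖φ x 0‖ ^ 2 + ‖φ x 1‖ ^ 2

lemma density_nonneg (φ : QWState) (x : ℤ) : 0 ≤ density φ x := by
  unfold density; positivity

lemma density_eq_zero_iff {φ : QWState} {x : ℤ} : density φ x = 0 ↔ φ x = 0 := by
  simp [density, add_eq_zero_iff_of_nonneg, funext_iff, Fin.forall_fin_two]

lemma density_of_eq_zero {φ : QWState} {x : ℤ} (h : φ x = 0) : density φ x = 0 :=
  density_eq_zero_iff.mpr h

lemma density_smul (c : ℂ) (φ : QWState) (x : ℤ) :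
    density (c • φ) x = ‖c‖ ^ 2 * density φ x := by
  simp only [density, Pi.smul_apply, smul_eq_mul, norm_mul]; ring

lemma summable_density {φ : QWState} (hφ : (Function.support φ).Finite) :
    Summable (density φ) :=
  summable_of_hasFiniteSupport <| hφ.subset fun _ hx h => hx (density_of_eq_zero h)

variable {C : ℤ → Matrix (Fin 2) (Fin 2) ℂ}

lemma qwalk_apply_zero (φ : QWState) (x : ℤ) :
    qwalk C φ x 0 = (C (x + 1) *ᵥ φ (x + 1)) 0 :=
  rfl

lemma qwalk_apply_one (φ : QWState) (x : ℤ) :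
    qwalk C φ x 1 = (C (x - 1) *ᵥ φ (x - 1)) 1 :=
  rfl

lemma qwalk_apply_eq_zero {φ : QWState} {x : ℤ} (h_succ : φ (x + 1) = 0)
    (h_pred : φ (x - 1) = 0) : qwalk C φ x = 0 := by
  ext i; fin_cases i <;> simp [qwalk, h_succ, h_pred]

lemma qwalk_apply_zero_of_eq_one {φ : QWState} {x : ℤ} (h : C (x + 1) = 1) :
    qwalk C φ x 0 = φ (x + 1) 0 := by
  rw [qwalk_apply_zero, h, Matrix.one_mulVec]

lemma qwalk_apply_succ_one_of_eq_one {φ : QWState} {x : ℤ} (h : C x = 1) :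
    qwalk C φ (x + 1) 1 = φ x 1 := by
  rw [qwalk_apply_one, add_sub_cancel_right, h, Matrix.one_mulVec]

variable (C) in
def qwalkₗ : QWState →ₗ[ℂ] QWState where
  toFun := qwalk C
  map_add' φ φ' := by
    ext x i; fin_cases i <;> simp [qwalk, Matrix.mulVec_add]
  map_smul' c φ := by
    ext x i; fin_cases i <;> simp [qwalk, Matrix.mulVec_smul]

lemma support_qwalk_subset (φ : QWState) :
    Function.support (qwalk C φ) ⊆
      (· + 1) ⁻¹' Function.support φ ∪ (· - 1) ⁻¹' Function.support φ := by
  intro x hx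
  by_contra h
  simp only [Set.mem_union, Set.mem_preimage, Function.mem_support, not_or, not_not] at h
  exact hx (qwalk_apply_eq_zero h.1 h.2)

lemma finite_support_qwalk {φ : QWState} (hφ : (Function.support φ).Finite) :
    (Function.support (qwalk C φ)).Finite :=
  ((hφ.preimage (add_left_injective 1).injOn).union
    (hφ.preimage sub_left_injective.injOn)).subset (support_qwalk_subset φ)

lemma tsum_density_qwalk (hC : ∀ x, C x ∈ Matrix.unitaryGroup (Fin 2) ℂ) {φ : QWState}
    (hφ : (Function.support φ).Finite) :
    ∑' x, density (qwalk C φ) x = ∑' x, density φ x := by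
  let F : ℤ → ℝ := fun x => ‖(C x *ᵥ φ x) 0‖ ^ 2
  let G : ℤ → ℝ := fun x => ‖(C x *ᵥ φ x) 1‖ ^ 2
  have hF : Summable F :=
    summable_of_hasFiniteSupport <| hφ.subset fun _ hx h => hx (by simp [F, h])
  have hG : Summable G :=
    summable_of_hasFiniteSupport <| hφ.subset fun _ hx h => hx (by simp [G, h])
  calc ∑' x, density (qwalk C φ) x = ∑' x, (F (x + 1) + G (x - 1)) := tsum_congr fun x => rfl
    _ = ∑' x, F (x + 1) + ∑' x, G (x - 1) :=
      ((Equiv.addRight (1 : ℤ)).summable_iff.mpr hF).tsum_add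
        ((Equiv.subRight (1 : ℤ)).summable_iff.mpr hG)
    _ = ∑' x, F x + ∑' x, G x :=
      congr_arg₂ (· + ·) ((Equiv.addRight (1 : ℤ)).tsum_eq F)
        ((Equiv.subRight (1 : ℤ)).tsum_eq G)
    _ = ∑' x, density φ x := by
      rw [← hF.tsum_add hG]
      refine tsum_congr fun x => ?_
      have := Matrix.sum_norm_sq_mulVec_of_mem_unitaryGroup (hC x) (φ x)
      rw [Fin.sum_univ_two, Fin.sum_univ_two] at this
      exact this

lemma tsum_density_iterate (hC : ∀ x, C x ∈ Matrix.unitaryGroup (Fin 2) ℂ) {φ : QWState}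
    (hφ : (Function.support φ).Finite) (n : ℕ) :
    ∑' x, density ((qwalk C)^[n] φ) x = ∑' x, density φ x := by
  induction n generalizing φ with
  | zero => rfl
  | succ n ih =>
    rw [Function.iterate_succ_apply, ih (finite_support_qwalk hφ), tsum_density_qwalk hC hφ]

lemma eq_zero_of_qwalk_eq_smul (hd : ∀ x, C x 1 1 ≠ 0) {φ : QWState}
    (hφ : (Function.support φ).Finite) {μ : ℂ} (hμ : μ ≠ 0) (h : qwalk C φ = μ • φ) :
    φ = 0 := by
  -- Downward induction from above the support: `(U φ) (x - 1) 0` only sees `φ x`, and once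
  -- `φ (x - 1) 0 = 0`, `(U φ) x 1` sees `φ (x - 1) 1` through `c₂₂ ≠ 0`.
  have step : ∀ x, φ x = 0 → φ (x - 1) = 0 := by
    intro x hx
    have h0 : φ (x - 1) 0 = 0 := by
      have := congrFun (congrFun h (x - 1)) 0
      rw [qwalk_apply_zero, sub_add_cancel, hx, Matrix.mulVec_zero] at this
      simpa [hμ] using this.symm
    have h1 : φ (x - 1) 1 = 0 := by
      have := congrFun (congrFun h x) 1
      simp only [qwalk_apply_one, Matrix.mulVec, dotProduct, Fin.sum_univ_two, h0, hx,
        Pi.smul_apply, Pi.zero_apply, smul_eq_mul, mul_zero, zero_add] at this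
      simpa [hd] using this
    ext i; fin_cases i <;> assumption
  obtain ⟨B, hB⟩ := hφ.bddAbove
  have above : ∀ x, B < x → φ x = 0 := fun x hx => by
    by_contra hne
    exact absurd (hB hne) (not_le.mpr hx)
  ext x : 1
  by_cases hx : x ≤ B + 1
  · exact Int.leInductionDown (motive := fun x _ => φ x = 0) (above _ (by omega))
      (fun y _ => step y) x hx
  · exact above x (by omega)

def reflect (φ : QWState) : QWState := fun x => φ (-x) ∘ Fin.rev

def reflectCoin (C : ℤ → Matrix (Fin 2) (Fin 2) ℂ) : ℤ → Matrix (Fin 2) (Fin 2) ℂ :=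
  fun x => (C (-x)).submatrix Fin.rev Fin.rev

lemma reflectCoin_mulVec_reflect (φ : QWState) (y : ℤ) :
    reflectCoin C (-y) *ᵥ reflect φ (-y) = (C y *ᵥ φ y) ∘ Fin.rev := by
  simp only [reflectCoin, reflect, neg_neg]
  exact Matrix.submatrix_mulVec_equiv (C y) (φ y ∘ Fin.rev) Fin.rev Fin.revPerm

lemma qwalk_reflect (φ : QWState) :
    qwalk (reflectCoin C) (reflect φ) = reflect (qwalk C φ) := by
  ext x i
  fin_cases i
  · have := congrFun (reflectCoin_mulVec_reflect (C := C) φ (-x - 1)) 0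
    rw [neg_sub, sub_neg_eq_add, add_comm] at this
    exact this
  · have := congrFun (reflectCoin_mulVec_reflect (C := C) φ (-x + 1)) 1
    rw [neg_add', neg_neg] at this
    exact this

lemma iterate_qwalk_reflect (φ : QWState) (n : ℕ) :
    (qwalk (reflectCoin C))^[n] (reflect φ) = reflect ((qwalk C)^[n] φ) := by
  induction n with
  | zero => rfl
  | succ n ih =>
    rw [Function.iterate_succ_apply', ih, qwalk_reflect, Function.iterate_succ_apply']

lemma reflectCoin_mem_unitaryGroup (hC : ∀ x, C x ∈ Matrix.unitaryGroup (Fin 2) ℂ) (x : ℤ) :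
    reflectCoin C x ∈ Matrix.unitaryGroup (Fin 2) ℂ := by
  rw [Matrix.mem_unitaryGroup_iff, reflectCoin, Matrix.star_eq_conjTranspose,
    Matrix.conjTranspose_submatrix]
  calc _ = (C (-x) * (C (-x))ᴴ).submatrix Fin.rev Fin.rev :=
        Matrix.submatrix_mul_equiv _ _ _ Fin.revPerm _
    _ = 1 := by
      rw [← Matrix.star_eq_conjTranspose, Matrix.mem_unitaryGroup_iff.mp (hC (-x))]
      exact Matrix.submatrix_one_equiv Fin.revPerm

lemma density_reflect (φ : QWState) (x : ℤ) : density (reflect φ) x = density φ (-x) := by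
  simp [density, reflect, add_comm]

lemma tsum_density_reflect {φ : QWState} {p q : ℤ → Prop} (hpq : ∀ x, p x ↔ q (-x)) :
    ∑' x : {x // p x}, density (reflect φ) x = ∑' x : {x // q x}, density φ x := by
  simp only [density_reflect]
  exact ((Equiv.neg ℤ).subtypeEquiv hpq).tsum_eq fun x : {x // q x} => density φ x

structure FreeBeyond (C : ℤ → Matrix (Fin 2) (Fin 2) ℂ) (ψ : QWState) (m : ℤ) : Prop where
  coin : ∀ x, m ≤ |x| → C x = 1
  state : ∀ x, m ≤ |x| → ψ x = 0

lemma exists_freeBeyond {ψ : QWState} (hC : {x | C x ≠ 1}.Finite)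
    (hψ : (Function.support ψ).Finite) : ∃ m, 0 ≤ m ∧ FreeBeyond C ψ m := by
  obtain ⟨M, hM⟩ := ((hC.union hψ).image (|·|)).bddAbove
  have hout : ∀ x, max M 0 + 1 ≤ |x| → C x = 1 ∧ ψ x = 0 := fun x hx => by
    by_contra hS
    have : |x| ≤ M := hM ⟨x, by simpa [or_iff_not_and_not] using hS, rfl⟩
    omega
  exact ⟨max M 0 + 1, by omega, fun x hx => (hout x hx).1, fun x hx => (hout x hx).2⟩

-- The mass that leaves the box `[-m, m]` to the right at step `k + 1`.
def outflow (C : ℤ → Matrix (Fin 2) (Fin 2) ℂ) (ψ : QWState) (m : ℤ) (k : ℕ) : ℝ :=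
  ‖(qwalk C)^[k] ψ m 1‖ ^ 2

namespace FreeBeyond

variable {ψ : QWState} {m : ℤ}

lemma reflected (h : FreeBeyond C ψ m) : FreeBeyond (reflectCoin C) (reflect ψ) m where
  coin x hx := by
    rw [reflectCoin, h.coin (-x) (by rwa [abs_neg])]
    exact Matrix.submatrix_one_equiv Fin.revPerm
  state x hx := by
    ext i
    simp [reflect, h.state (-x) (by rwa [abs_neg])]

lemma iterate_apply (h : FreeBeyond C ψ m) (n : ℕ) {x : ℤ} (hx : m + n ≤ |x|) :
    (qwalk C)^[n] ψ x = 0 := by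
  induction n generalizing x with
  | zero => exact h.state x (by simpa using hx)
  | succ n ih =>
    rw [Function.iterate_succ_apply']
    exact qwalk_apply_eq_zero (ih (by grind)) (ih (by grind))

lemma iterate_finite_support (h : FreeBeyond C ψ m) (n : ℕ) :
    (Function.support ((qwalk C)^[n] ψ)).Finite :=
  (Set.finite_Ioo (-(m + n)) (m + n)).subset fun x hx => by
    by_contra hx'
    exact hx (h.iterate_apply n (by rw [Set.mem_Ioo, not_and_or, not_lt, not_lt] at hx'; grind))

lemma finite_support (h : FreeBeyond C ψ m) : (Function.support ψ).Finite :=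
  h.iterate_finite_support 0

lemma iterate_apply_zero (h : FreeBeyond C ψ m) (n : ℕ) {x : ℤ} (hx : m ≤ x) :
    (qwalk C)^[n] ψ x 0 = 0 := by
  induction n generalizing x with
  | zero => simp [h.state x (hx.trans (le_abs_self x))]
  | succ n ih =>
    rw [Function.iterate_succ_apply',
      qwalk_apply_zero_of_eq_one (h.coin _ (by grind [le_abs_self])), ih (by omega)]

lemma iterate_apply_one (h : FreeBeyond C ψ m) (n : ℕ) {x : ℤ} (hx : x ≤ -m) :
    (qwalk C)^[n] ψ x 1 = 0 := by
  simpa [iterate_qwalk_reflect, reflect] using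
    h.reflected.iterate_apply_zero n (x := -x) (by omega)

lemma iterate_add_apply_one (h : FreeBeyond C ψ m) (k j : ℕ) :
    (qwalk C)^[k + j] ψ (m + j) 1 = (qwalk C)^[k] ψ m 1 := by
  induction j with
  | zero => simp
  | succ j ih =>
    rw [← add_assoc, Function.iterate_succ_apply', Nat.cast_succ, ← add_assoc,
      qwalk_apply_succ_one_of_eq_one (h.coin _ (by grind [le_abs_self])), ih]

lemma density_iterate_add (h : FreeBeyond C ψ m) (k j : ℕ) :
    density ((qwalk C)^[k + j] ψ) (m + j) = outflow C ψ m k := by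
  rw [density, h.iterate_apply_zero _ (by omega), h.iterate_add_apply_one, outflow]
  simp

lemma tsum_subtype_density_iterate (h : FreeBeyond C ψ m) {p : ℤ → Prop} [DecidablePred p]
    (hp : ∀ x, p x → m < x) (n : ℕ) :
    ∑' x : {x // p x}, density ((qwalk C)^[n] ψ) x =
      ∑ k ∈ range n, if p (m + (n - k : ℕ)) then outflow C ψ m k else 0 := by
  have hinj : Set.InjOn (fun k : ℕ => m + (n - k : ℕ)) (range n) := by
    intro a ha b hb hab
    simp only [coe_range, Set.mem_Iio] at ha hb hab
    omega
  rw [tsum_subtype_eq_tsum_indicator,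
    tsum_eq_sum (s := (range n).image fun k : ℕ => m + (n - k : ℕ)), sum_image hinj]
  · refine sum_congr rfl fun k hk => ?_
    rw [mem_range] at hk
    simp only [Set.indicator_apply, Set.mem_ofPred_eq, ← h.density_iterate_add k (n - k),
      Nat.add_sub_cancel' hk.le]
  · intro x hx
    refine Set.indicator_apply_eq_zero.mpr fun hpx => density_of_eq_zero (h.iterate_apply n ?_)
    have hmx := hp x hpx
    refine le_trans ?_ (le_abs_self x)
    by_contra hlt
    exact hx (mem_image.mpr ⟨n - (x - m).toNat, by simp; omega, by omega⟩)

lemma sum_range_outflow (h : FreeBeyond C ψ m) (n : ℕ) :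
    ∑ k ∈ range n, outflow C ψ m k = ∑' x : {x // m < x}, density ((qwalk C)^[n] ψ) x := by
  rw [h.tsum_subtype_density_iterate (fun _ hx => hx)]
  exact sum_congr rfl fun k hk => (if_pos (by simp at hk; omega)).symm

lemma summable_outflow (hC : ∀ x, C x ∈ Matrix.unitaryGroup (Fin 2) ℂ)
    (h : FreeBeyond C ψ m) : Summable (outflow C ψ m) := by
  refine summable_of_sum_range_le (c := ∑' x, density ψ x) (fun k => sq_nonneg _) fun n => ?_
  rw [h.sum_range_outflow, ← tsum_density_iterate hC h.finite_support n]
  exact (summable_density (h.iterate_finite_support n)).tsum_subtype_le _ _ (density_nonneg _)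

lemma tendsto_tsum_density_ge (hC : ∀ x, C x ∈ Matrix.unitaryGroup (Fin 2) ℂ)
    (h : FreeBeyond C ψ m) {ε : ℝ} (hε0 : 0 < ε) (hε1 : ε < 1) :
    Tendsto (fun n : ℕ =>
        ∑' x : {x : ℤ // (1 - ε) * n ≤ (x : ℝ)}, density ((qwalk C)^[n] ψ) x)
      atTop (𝓝 (∑' k, outflow C ψ m k)) := by
  have hlim := (h.summable_outflow hC).tendsto_sum_tsum_nat
  -- `m + (n - k) ≥ (1 - ε) n` exactly when `k ≤ m + ε n`.
  have hcut : Tendsto (fun n : ℕ => ⌊m + ε * n⌋₊) atTop atTop :=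
    tendsto_nat_floor_atTop.comp <| tendsto_atTop_add_const_left _ _ <|
      tendsto_natCast_atTop_atTop.const_mul_atTop hε0
  have hlarge : ∀ᶠ n : ℕ in atTop, (m : ℝ) < (1 - ε) * n :=
    (tendsto_natCast_atTop_atTop.const_mul_atTop (by linarith)).eventually_gt_atTop _
  have hsum : ∀ᶠ n : ℕ in atTop, ∑' x : {x : ℤ // (1 - ε) * n ≤ (x : ℝ)},
      density ((qwalk C)^[n] ψ) x = ∑ k ∈ range n,
        if (1 - ε) * n ≤ ((m + (n - k : ℕ) : ℤ) : ℝ) then outflow C ψ m k else 0 := by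
    filter_upwards [hlarge] with n hn
    exact h.tsum_subtype_density_iterate (fun x hx => by exact_mod_cast hn.trans_le hx) n
  refine tendsto_of_tendsto_of_tendsto_of_le_of_le' (hlim.comp hcut) hlim ?_ ?_
  · filter_upwards [hsum, hlarge] with n hn hlarge
    rw [hn]
    have hcut_le : ⌊m + ε * n⌋₊ ≤ n := Nat.floor_le_of_le (by linarith)
    calc ∑ k ∈ range ⌊m + ε * n⌋₊, outflow C ψ m k
        = ∑ k ∈ range ⌊m + ε * n⌋₊,
            if (1 - ε) * n ≤ ((m + (n - k : ℕ) : ℤ) : ℝ) then outflow C ψ m k else 0 := by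
          refine sum_congr rfl fun k hk => (if_pos ?_).symm
          have hkn : k ≤ n := ((mem_range.mp hk).trans_le hcut_le).le
          have hk := Nat.lt_of_lt_floor (mem_range.mp hk)
          push_cast [Nat.cast_sub hkn]
          linarith
      _ ≤ _ := sum_le_sum_of_subset_of_nonneg (range_subset_range.mpr hcut_le)
          fun k _ _ => by split_ifs <;> simp [outflow]
  · filter_upwards [hsum] with n hn
    rw [hn]
    exact sum_le_sum fun k _ => by split_ifs <;> simp [outflow]

lemma tendsto_tsum_density_le_neg (hC : ∀ x, C x ∈ Matrix.unitaryGroup (Fin 2) ℂ)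
    (h : FreeBeyond C ψ m) {ε : ℝ} (hε0 : 0 < ε) (hε1 : ε < 1) :
    Tendsto (fun n : ℕ =>
        ∑' x : {x : ℤ // (x : ℝ) ≤ -((1 - ε) * n)}, density ((qwalk C)^[n] ψ) x)
      atTop (𝓝 (∑' k, outflow (reflectCoin C) (reflect ψ) m k)) := by
  refine (h.reflected.tendsto_tsum_density_ge (reflectCoin_mem_unitaryGroup hC) hε0 hε1).congr
    fun n => ?_
  rw [iterate_qwalk_reflect]
  exact tsum_density_reflect fun x => by push_cast; constructor <;> intro <;> linarith

end FreeBeyond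

abbrev BoxState (m : ℤ) := Set.Icc (-m) m → Fin 2 → ℂ

def extendBox (m : ℤ) : BoxState m →ₗ[ℂ] QWState where
  toFun v x := if h : x ∈ Set.Icc (-m) m then v ⟨x, h⟩ else 0
  map_add' v w := funext fun x => by simp only [Pi.add_apply]; split_ifs <;> simp
  map_smul' c v := funext fun x => by
    simp only [Pi.smul_apply, RingHom.id_apply]; split_ifs <;> simp

variable {m : ℤ}

lemma extendBox_apply_of_mem (v : BoxState m) {x : ℤ} (hx : x ∈ Set.Icc (-m) m) :
    extendBox m v x = v ⟨x, hx⟩ :=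
  dif_pos hx

lemma extendBox_apply_of_notMem (v : BoxState m) {x : ℤ} (hx : x ∉ Set.Icc (-m) m) :
    extendBox m v x = 0 :=
  dif_neg hx

lemma finite_support_extendBox (v : BoxState m) : (Function.support (extendBox m v)).Finite :=
  (Set.finite_Icc (-m) m).subset fun x hx => by
    by_contra h
    exact hx (extendBox_apply_of_notMem v h)

variable (C m) in
def boxWalk : BoxState m →L[ℂ] BoxState m :=
  LinearMap.toContinuousLinearMap
    (LinearMap.funLeft ℂ (Fin 2 → ℂ) Subtype.val ∘ₗ qwalkₗ C ∘ₗ extendBox m)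

lemma boxWalk_apply (v : BoxState m) (x : Set.Icc (-m) m) :
    boxWalk C m v x = qwalk C (extendBox m v) x :=
  rfl

lemma boxWalk_domRestrict {φ : QWState} (h_succ : (C (m + 1) *ᵥ φ (m + 1)) 0 = 0)
    (h_pred : (C (-m - 1) *ᵥ φ (-m - 1)) 1 = 0) :
    boxWalk C m ((Set.Icc (-m) m).domRestrict φ) =
      (Set.Icc (-m) m).domRestrict (qwalk C φ) := by
  ext ⟨x, hx⟩ i
  rw [Set.mem_Icc] at hx
  rw [boxWalk_apply, Set.domRestrict_apply]
  fin_cases i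
  · show (C (x + 1) *ᵥ extendBox m _ (x + 1)) 0 = (C (x + 1) *ᵥ φ (x + 1)) 0
    by_cases hx1 : x + 1 ≤ m
    · rw [extendBox_apply_of_mem _ ⟨by omega, hx1⟩]; rfl
    · obtain rfl : x = m := by omega
      rw [extendBox_apply_of_notMem _ (by rw [Set.mem_Icc]; omega), Matrix.mulVec_zero, h_succ]
      rfl
  · show (C (x - 1) *ᵥ extendBox m _ (x - 1)) 1 = (C (x - 1) *ᵥ φ (x - 1)) 1
    by_cases hx1 : -m ≤ x - 1
    · rw [extendBox_apply_of_mem _ ⟨hx1, by omega⟩]; rfl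
    · obtain rfl : x = -m := by omega
      rw [extendBox_apply_of_notMem _ (by rw [Set.mem_Icc]; omega), Matrix.mulVec_zero, h_pred]
      rfl

lemma FreeBeyond.boxWalk_pow_domRestrict {ψ : QWState} (h : FreeBeyond C ψ m) (n : ℕ) :
    (boxWalk C m ^ n) ((Set.Icc (-m) m).domRestrict ψ) =
      (Set.Icc (-m) m).domRestrict ((qwalk C)^[n] ψ) := by
  induction n with
  | zero => rfl
  | succ n ih =>
    rw [pow_succ', mul_apply_eq_comp, ih, Function.iterate_succ_apply']
    refine boxWalk_domRestrict ?_ ?_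
    · rw [h.coin _ (by grind [le_abs_self]), Matrix.one_mulVec]
      exact h.iterate_apply_zero n (by omega)
    · rw [h.coin _ (by grind [neg_le_abs]), Matrix.one_mulVec]
      exact h.iterate_apply_one n (by omega)

lemma qwalk_extendBox_eq_smul (hC : ∀ x, C x ∈ Matrix.unitaryGroup (Fin 2) ℂ)
    {v : BoxState m} {μ : ℂ} (hv : boxWalk C m v = μ • v) (hμ : 1 ≤ ‖μ‖) :
    qwalk C (extendBox m v) = μ • extendBox m v := by
  set φ := extendBox m v
  -- `ρ` is what `U` moves out of the box; conservation gives `‖ρ‖² = (1 - |μ|²) ‖φ‖² ≤ 0`.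
  set ρ := qwalk C φ - μ • φ
  have hbox : ∀ x ∈ Set.Icc (-m) m, qwalk C φ x = μ • φ x := fun x hx => by
    rw [show φ x = v ⟨x, hx⟩ from extendBox_apply_of_mem v hx, ← boxWalk_apply v ⟨x, hx⟩, hv]
    rfl
  have hsplit : ∀ x, density (qwalk C φ) x = ‖μ‖ ^ 2 * density φ x + density ρ x := by
    intro x
    by_cases hx : x ∈ Set.Icc (-m) m
    · have hρx : ρ x = 0 := by simp [ρ, hbox x hx]
      rw [density_of_eq_zero hρx, add_zero, ← density_smul]
      simp [density, hbox x hx]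
    · have hφx : φ x = 0 := extendBox_apply_of_notMem v hx
      simp [density, ρ, hφx]
  have hφ := finite_support_extendBox v
  have hsum : Summable (density ρ) :=
    (summable_density (finite_support_qwalk hφ)).of_nonneg_of_le (density_nonneg ρ) fun x => by
      nlinarith [hsplit x, density_nonneg φ x, sq_nonneg ‖μ‖]
  have hρφ : ∑' x, density ρ x = (1 - ‖μ‖ ^ 2) * ∑' x, density φ x := by
    have := tsum_density_qwalk hC hφ
    rw [tsum_congr hsplit, ((summable_density hφ).mul_left _).tsum_add hsum, tsum_mul_left] at this
    linarith
  have hρ0 : ∑' x, density ρ x = 0 := le_antisymm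
    (hρφ ▸ mul_nonpos_of_nonpos_of_nonneg (by nlinarith) (tsum_nonneg (density_nonneg φ)))
    (tsum_nonneg (density_nonneg ρ))
  have hρ : ρ = 0 := funext fun x => density_eq_zero_iff.mp <| congrFun
    ((hasSum_zero_iff_of_nonneg (density_nonneg ρ)).mp (hρ0 ▸ hsum.hasSum)) x
  exact sub_eq_zero.mp hρ

lemma norm_lt_one_of_mem_spectrum_boxWalk (hC : ∀ x, C x ∈ Matrix.unitaryGroup (Fin 2) ℂ)
    (hd : ∀ x, C x 1 1 ≠ 0) {μ : ℂ} (hμ : μ ∈ spectrum ℂ (boxWalk C m)) : ‖μ‖ < 1 := by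
  rw [ContinuousLinearMap.spectrum_eq, ← Module.End.hasEigenvalue_iff_mem_spectrum] at hμ
  obtain ⟨v, hv⟩ := hμ.exists_hasEigenvector
  by_contra hlt
  have hμ1 : 1 ≤ ‖μ‖ := not_lt.mp hlt
  have hext := eq_zero_of_qwalk_eq_smul hd (finite_support_extendBox v)
    (norm_pos_iff.mp (one_pos.trans_le hμ1)) (qwalk_extendBox_eq_smul hC hv.apply_eq_smul hμ1)
  refine hv.2 (funext fun x => ?_)
  rw [← extendBox_apply_of_mem v x.2, hext]
  rfl

lemma spectralRadius_boxWalk_lt_one (hC : ∀ x, C x ∈ Matrix.unitaryGroup (Fin 2) ℂ)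
    (hd : ∀ x, C x 1 1 ≠ 0) (hm : 0 ≤ m) : spectralRadius ℂ (boxWalk C m) < 1 := by
  have : Nonempty (Set.Icc (-m) m) := ⟨⟨0, by simpa using hm⟩⟩
  simpa using spectrum.spectralRadius_lt_of_forall_lt (boxWalk C m) (r := 1) fun μ hμ => by
    simpa [← NNReal.coe_lt_coe] using norm_lt_one_of_mem_spectrum_boxWalk hC hd hμ

lemma FreeBeyond.tendsto_sum_density_Icc (hC : ∀ x, C x ∈ Matrix.unitaryGroup (Fin 2) ℂ)
    (hd : ∀ x, C x 1 1 ≠ 0) {ψ : QWState} (h : FreeBeyond C ψ m) (hm : 0 ≤ m) :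
    Tendsto (fun n : ℕ => ∑ x : Set.Icc (-m) m, density ((qwalk C)^[n] ψ) x) atTop (𝓝 0) := by
  have hpow := tendsto_pow_atTop_nhds_zero_of_spectralRadius_lt_one
    (spectralRadius_boxWalk_lt_one hC hd hm)
  have hv := ((ContinuousLinearMap.apply ℂ (BoxState m)
    ((Set.Icc (-m) m).domRestrict ψ)).continuous.tendsto 0).comp hpow
  have hcont : Continuous fun v : BoxState m => ∑ x, (‖v x 0‖ ^ 2 + ‖v x 1‖ ^ 2) := by
    fun_prop
  simpa [Function.comp_def, h.boxWalk_pow_domRestrict, density, Set.domRestrict_apply] using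
    (hcont.tendsto 0).comp hv

lemma FreeBeyond.tsum_outflow_add_tsum_outflow_reflect
    (hC : ∀ x, C x ∈ Matrix.unitaryGroup (Fin 2) ℂ) (hd : ∀ x, C x 1 1 ≠ 0) {ψ : QWState}
    (h : FreeBeyond C ψ m) (hm : 0 ≤ m) :
    ∑' k, outflow C ψ m k + ∑' k, outflow (reflectCoin C) (reflect ψ) m k =
      ∑' x, density ψ x := by
  have hsplit : ∀ n, ∑ x : Set.Icc (-m) m, density ((qwalk C)^[n] ψ) x +
      (∑ k ∈ range n, outflow C ψ m k +
        ∑ k ∈ range n, outflow (reflectCoin C) (reflect ψ) m k) = ∑' x, density ψ x := by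
    intro n
    rw [h.sum_range_outflow, h.reflected.sum_range_outflow, iterate_qwalk_reflect,
      tsum_density_reflect (q := fun x => x < -m) fun x => by omega, ← add_assoc,
      ← tsum_eq_sum_Icc_add_tsum_gt_add_tsum_lt (summable_density (h.iterate_finite_support n)) hm,
      tsum_density_iterate hC h.finite_support]
  have hlim := (h.tendsto_sum_density_Icc hC hd hm).add
    ((h.summable_outflow hC).tendsto_sum_tsum_nat.add
      (h.reflected.summable_outflow (reflectCoin_mem_unitaryGroup hC)).tendsto_sum_tsum_nat)
  rw [zero_add] at hlim
  exact tendsto_nhds_unique hlim (tendsto_const_nhds.congr fun n => (hsplit n).symm)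

lemma FreeBeyond.tendsto_tsum_density_abs_le (hC : ∀ x, C x ∈ Matrix.unitaryGroup (Fin 2) ℂ)
    (hd : ∀ x, C x 1 1 ≠ 0) {ψ : QWState} (h : FreeBeyond C ψ m) (hm : 0 ≤ m) {ε : ℝ}
    (hε0 : 0 < ε) (hε1 : ε < 1) :
    Tendsto (fun n : ℕ =>
        ∑' x : {x : ℤ // |(x : ℝ)| ≤ (1 - ε) * n}, density ((qwalk C)^[n] ψ) x)
      atTop (𝓝 0) := by
  have hlim := ((h.tendsto_tsum_density_ge hC (half_pos hε0) (by linarith)).add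
    (h.tendsto_tsum_density_le_neg hC (half_pos hε0) (by linarith))).const_sub
      (∑' x, density ψ x)
  rw [h.tsum_outflow_add_tsum_outflow_reflect hC hd hm, sub_self] at hlim
  refine squeeze_zero' (.of_forall fun n => tsum_nonneg fun x => density_nonneg _ _) ?_ hlim
  filter_upwards [eventually_gt_atTop 0] with n hn
  have hn : (0 : ℝ) < n := by exact_mod_cast hn
  have := tsum_abs_le_add_tsum_ge_add_tsum_le_neg_le_tsum
    (summable_density (h.iterate_finite_support n)) (density_nonneg _)
    (a := (1 - ε) * n) (b := (1 - ε / 2) * n) (by nlinarith) (by nlinarith)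
  rw [tsum_density_iterate hC h.finite_support] at this
  linarith

end QuantumWalk

open QuantumWalk

/-- Weak limit of X_n/n: for a compactly supported normalized initial state, the position
distribution concentrates linearly at speed ±1, with limiting weights c₊, c₋ ≥ 0,
c₊ + c₋ = 1. -/
theorem weak_limit_velocity
    (C : ℤ → Matrix (Fin 2) (Fin 2) ℂ) (hC : CoinAssumption C)
    (ψ : QWState) (hψfin : Set.Finite {x : ℤ | ψ x ≠ 0})
    (hnorm : ∑' x : ℤ, (‖ψ x 0‖ ^ 2 + ‖ψ x 1‖ ^ 2) = 1) :
    ∃ cp cm : ℝ, 0 ≤ cp ∧ 0 ≤ cm ∧ cp + cm = 1 ∧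
      ∀ ε : ℝ, 0 < ε → ε < 1 →
        (Tendsto (fun n : ℕ =>
            ∑' x : {x : ℤ // |(x : ℝ)| ≤ (1 - ε) * n},
              (‖(qwalk C)^[n] ψ x.1 0‖ ^ 2 + ‖(qwalk C)^[n] ψ x.1 1‖ ^ 2))
          atTop (nhds 0)) ∧
        (Tendsto (fun n : ℕ =>
            ∑' x : {x : ℤ // (1 - ε) * n ≤ (x : ℝ)},
              (‖(qwalk C)^[n] ψ x.1 0‖ ^ 2 + ‖(qwalk C)^[n] ψ x.1 1‖ ^ 2))
          atTop (nhds cp)) ∧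
        (Tendsto (fun n : ℕ =>
            ∑' x : {x : ℤ // (x : ℝ) ≤ -((1 - ε) * n)},
              (‖(qwalk C)^[n] ψ x.1 0‖ ^ 2 + ‖(qwalk C)^[n] ψ x.1 1‖ ^ 2))
          atTop (nhds cm)) := by
  obtain ⟨m, hm, h⟩ := exists_freeBeyond hC.fin hψfin
  refine ⟨_, _, tsum_nonneg fun _ => sq_nonneg _, tsum_nonneg fun _ => sq_nonneg _,
    (h.tsum_outflow_add_tsum_outflow_reflect hC.unitary hC.d22 hm).trans hnorm,
    fun ε hε0 hε1 => ⟨h.tendsto_tsum_density_abs_le hC.unitary hC.d22 hm hε0 hε1,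
      h.tendsto_tsum_density_ge hC.unitary hε0 hε1,
      h.tendsto_tsum_density_le_neg hC.unitary hε0 hε1⟩⟩
end
end

section
/- (Geometric simplicity of resonances.) Let C : ℤ → U(2) satisfy the standing Assumption and let U = S∘C. For every λ ∈ ℂ∖{0}, the space of outgoing solutions φ : ℤ → ℂ² of the eigenequation Uφ = λφ has dimension at most one; that is, if φ₁ and φ₂ are outgoing maps satisfying Uφ₁ = λφ₁ and Uφ₂ = λφ₂ with φ₁ not identically zero, then there exists c ∈ ℂ with φ₂ = c·φ₁. -/
noncomputable section

open scoped ComplexConjugate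

/-!
Since `λ ≠ 0`, `c₁₁ ≠ 0` and `c₂₂ ≠ 0`, the eigenequation `Uφ = λφ` is a first-order recurrence
that can be solved both forwards and backwards in `x`, so a solution is determined by its value
at a single site. Far to the right every outgoing solution has vanishing left component, so two
outgoing solutions are proportional there, hence everywhere.
-/

section QuantumWalk

variable (C : ℤ → Matrix (Fin 2) (Fin 2) ℂ)

lemma qwalk_apply_zero (ψ : QWState) (x : ℤ) :
    qwalk C ψ x 0 = C (x + 1) 0 0 * ψ (x + 1) 0 + C (x + 1) 0 1 * ψ (x + 1) 1 := by
  simp [qwalk, Matrix.mulVec, dotProduct, Fin.sum_univ_two]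

lemma qwalk_apply_one (ψ : QWState) (x : ℤ) :
    qwalk C ψ x 1 = C (x - 1) 1 0 * ψ (x - 1) 0 + C (x - 1) 1 1 * ψ (x - 1) 1 := by
  simp [qwalk, Matrix.mulVec, dotProduct, Fin.sum_univ_two]

lemma qwalk_sub (ψ₁ ψ₂ : QWState) : qwalk C (ψ₁ - ψ₂) = qwalk C ψ₁ - qwalk C ψ₂ := by
  ext x i
  fin_cases i <;> simp [qwalk, Matrix.mulVec_sub]

lemma qwalk_smul (c : ℂ) (ψ : QWState) : qwalk C (c • ψ) = c • qwalk C ψ := by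
  ext x i
  fin_cases i <;> simp [qwalk, Matrix.mulVec_smul]

variable {C} {lam : ℂ} {ψ : QWState}

lemma qwalk_eigen_sub_smul {φ₁ φ₂ : QWState} (h₁ : qwalk C φ₁ = lam • φ₁)
    (h₂ : qwalk C φ₂ = lam • φ₂) (c : ℂ) :
    qwalk C (φ₂ - c • φ₁) = lam • (φ₂ - c • φ₁) := by
  rw [qwalk_sub, qwalk_smul, h₁, h₂, smul_sub, smul_comm c lam]

lemma qwalk_eigen_succ_eq_zero (hd11 : ∀ x, C x 0 0 ≠ 0) (hlam : lam ≠ 0)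
    (heig : qwalk C ψ = lam • ψ) {y : ℤ} (hy : ψ y = 0) : ψ (y + 1) = 0 := by
  have hR : ψ (y + 1) 1 = 0 := by
    have h := congrFun (congrFun heig (y + 1)) 1
    simp only [qwalk_apply_one, add_sub_cancel_right, hy, Pi.zero_apply, mul_zero, add_zero,
      Pi.smul_apply, smul_eq_mul] at h
    exact (mul_eq_zero.mp h.symm).resolve_left hlam
  have hL : ψ (y + 1) 0 = 0 := by
    have h := congrFun (congrFun heig y) 0
    simp only [qwalk_apply_zero, hR, hy, Pi.zero_apply, mul_zero, add_zero, Pi.smul_apply,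
      smul_eq_mul] at h
    exact (mul_eq_zero.mp h).resolve_left (hd11 (y + 1))
  ext i
  fin_cases i <;> assumption

lemma qwalk_eigen_pred_eq_zero (hd22 : ∀ x, C x 1 1 ≠ 0) (hlam : lam ≠ 0)
    (heig : qwalk C ψ = lam • ψ) {y : ℤ} (hy : ψ y = 0) : ψ (y - 1) = 0 := by
  have hL : ψ (y - 1) 0 = 0 := by
    have h := congrFun (congrFun heig (y - 1)) 0
    simp only [qwalk_apply_zero, sub_add_cancel, hy, Pi.zero_apply, mul_zero, add_zero,
      Pi.smul_apply, smul_eq_mul] at h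
    exact (mul_eq_zero.mp h.symm).resolve_left hlam
  have hR : ψ (y - 1) 1 = 0 := by
    have h := congrFun (congrFun heig y) 1
    simp only [qwalk_apply_one, hL, hy, Pi.zero_apply, mul_zero, zero_add, Pi.smul_apply,
      smul_eq_mul] at h
    exact (mul_eq_zero.mp h).resolve_left (hd22 (y - 1))
  ext i
  fin_cases i <;> assumption

lemma qwalk_eigen_eq_zero_of_apply_eq_zero (hd11 : ∀ x, C x 0 0 ≠ 0)
    (hd22 : ∀ x, C x 1 1 ≠ 0) (hlam : lam ≠ 0) (heig : qwalk C ψ = lam • ψ) {x₀ : ℤ}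
    (h₀ : ψ x₀ = 0) : ψ = 0 := by
  funext x
  induction x using Int.inductionOn' (b := x₀) with
  | zero => exact h₀
  | succ k _ ih => exact qwalk_eigen_succ_eq_zero hd11 hlam heig ih
  | pred k _ ih => exact qwalk_eigen_pred_eq_zero hd22 hlam heig ih

end QuantumWalk

/-- Geometric simplicity of resonances: for λ ≠ 0, the space of outgoing solutions
of the eigenequation Uφ = λφ is at most one-dimensional. -/
theorem geometric_simplicity_of_resonances
    (C : ℤ → Matrix (Fin 2) (Fin 2) ℂ) (hC : CoinAssumption C)
    (lam : ℂ) (hlam : lam ≠ 0)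
    (φ₁ φ₂ : QWState) (h₁out : Outgoing φ₁) (h₂out : Outgoing φ₂)
    (h₁eig : ∀ x : ℤ, ∀ i : Fin 2, qwalk C φ₁ x i = lam * φ₁ x i)
    (h₂eig : ∀ x : ℤ, ∀ i : Fin 2, qwalk C φ₂ x i = lam * φ₂ x i)
    (h₁ne : ∃ x : ℤ, ∃ i : Fin 2, φ₁ x i ≠ 0) :
    ∃ c : ℂ, ∀ x : ℤ, ∀ i : Fin 2, φ₂ x i = c * φ₁ x i := by
  have h₁ : qwalk C φ₁ = lam • φ₁ := funext fun x => funext (h₁eig x)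
  have h₂ : qwalk C φ₂ = lam • φ₂ := funext fun x => funext (h₂eig x)
  have determined : ∀ ψ : QWState, qwalk C ψ = lam • ψ → ∀ x₀, ψ x₀ = 0 → ψ = 0 :=
    fun _ heig _ => qwalk_eigen_eq_zero_of_apply_eq_zero hC.d11 hC.d22 hlam heig
  obtain ⟨r₁, -, hr₁⟩ := h₁out
  obtain ⟨r₂, -, hr₂⟩ := h₂out
  set x₀ := max r₁ r₂ + 1
  have h₁L : φ₁ x₀ 0 = 0 := (hr₁ x₀ (by omega)).1
  have h₂L : φ₂ x₀ 0 = 0 := (hr₂ x₀ (by omega)).1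
  have h₁R : φ₁ x₀ 1 ≠ 0 := by
    intro h₁R
    obtain ⟨x, i, hne⟩ := h₁ne
    refine hne (congrFun (congrFun (determined φ₁ h₁ x₀ ?_) x) i)
    ext i
    fin_cases i <;> assumption
  refine ⟨φ₂ x₀ 1 / φ₁ x₀ 1, fun x i => sub_eq_zero.mp ?_⟩
  refine congrFun (congrFun (determined _ (qwalk_eigen_sub_smul h₁ h₂ _) x₀ ?_) x) i
  ext i
  fin_cases i
  · simp [h₁L, h₂L]
  · simp [div_mul_cancel₀ _ h₁R]
end
end
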